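/- Let X := B(a, r₀) ⊂ ℝⁿ be an open ball (a ∈ ℝⁿ, r₀ > 0). Let Φ₁, Φ₂ be Young functions, and suppose there is a Young function Φ such that Φ₁⁻¹(t)·Φ⁻¹(t) ≤ Φ₂⁻¹(t) for every t ≥ 0, where Ψ⁻¹(s) := inf { r ≥ 0 : Ψ(r) > s }. Then for every measurable f : X → ℝ with ‖f‖_{L_{Φ₁}(X)} < ∞ one has ‖f‖_{L_{Φ₂}(X)} ≤ (2 / Φ⁻¹(1/|B(a,r₀)|)) · ‖f‖_{L_{Φ₁}(X)}, where |B(a,r₀)| is the Lebesgue measure of the ball; in particular L_{Φ₁}(X) ⊆ L_{Φ₂}(X). -/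

import Mathlib

/-!
Young's inequality for the generalized inverses: if `Φ₁⁻¹ · Φ⁻¹ ≤ Φ₂⁻¹`, then
`Φ₂ (u v) ≤ Φ₁ u + Φ v`, since `u ≤ Φ₁⁻¹ t` and `v ≤ Φ⁻¹ t` for `t = Φ₁ u + Φ v`.
Take `v₀ = Φ⁻¹ (1 / μ X)`, so that `Φ v₀ · μ X ≤ 1`. If `b` is admissible for the Luxemburg
norm of `f` in `L_{Φ₁}`, then convexity gives
`∫ Φ₂ (|f| v₀ / (2 b)) ≤ (∫ Φ₁ (|f| / b) + Φ v₀ · μ X) / 2 ≤ 1`,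
so `2 b / v₀` is admissible for `L_{Φ₂}`.
-/

open MeasureTheory Filter Set
open scoped ENNReal

/-- A Young function: convex on `[0,∞)`, left-continuous, `Φ 0 = 0`,
`Φ t → ∞` as `t → ∞`, and taking values in `[0,∞)`. -/
def IsYoungFunction (Φ : ℝ → ℝ) : Prop :=
  ConvexOn ℝ (Set.Ici 0) Φ ∧
  (∀ t : ℝ, 0 ≤ t → ContinuousWithinAt Φ (Set.Iic t) t) ∧
  Φ 0 = 0 ∧
  Tendsto Φ atTop atTop ∧
  ∀ t : ℝ, 0 ≤ t → 0 ≤ Φ t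

/-- Generalized inverse `Φ⁻¹(s) = inf {r ≥ 0 : Φ r > s}`. -/
noncomputable def youngInv (Φ : ℝ → ℝ) (s : ℝ) : ℝ :=
  sInf {r : ℝ | 0 ≤ r ∧ s < Φ r}

/-- The Luxemburg (Orlicz) norm of `f` with respect to a measure `μ`, valued in `ℝ≥0∞`. -/
noncomputable def luxNormOn {n : ℕ} (Φ : ℝ → ℝ) (μ : Measure (EuclideanSpace ℝ (Fin n)))
    (f : EuclideanSpace ℝ (Fin n) → ℝ) : ℝ≥0∞ :=
  sInf (ENNReal.ofReal ''
    {b : ℝ | 0 < b ∧ ∫⁻ x, ENNReal.ofReal (Φ (|f x| / b)) ∂μ ≤ 1})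

lemma youngInv_nonneg (Φ : ℝ → ℝ) (s : ℝ) : 0 ≤ youngInv Φ s :=
  Real.sInf_nonneg fun _ hr => hr.1

lemma apply_le_of_lt_youngInv {Φ : ℝ → ℝ} {r s : ℝ} (hr₀ : 0 ≤ r) (hr : r < youngInv Φ s) :
    Φ r ≤ s :=
  le_of_not_gt fun hs => (csInf_le ⟨0, fun _ hq => hq.1⟩ ⟨hr₀, hs⟩ : youngInv Φ s ≤ r).not_gt hr

namespace IsYoungFunction

variable {Φ : ℝ → ℝ} (h : IsYoungFunction Φ)
include h

lemma nonneg {t : ℝ} (ht : 0 ≤ t) : 0 ≤ Φ t := h.2.2.2.2 t ht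

lemma apply_mul_le {c x : ℝ} (hc₀ : 0 ≤ c) (hc₁ : c ≤ 1) (hx : 0 ≤ x) :
    Φ (c * x) ≤ c * Φ x := by
  simpa [h.2.2.1] using
    h.1.2 (mem_Ici.mpr hx) (mem_Ici.mpr le_rfl) hc₀ (sub_nonneg.mpr hc₁) (add_sub_cancel c 1)

lemma monotoneOn : MonotoneOn Φ (Ici 0) := by
  rintro x (hx : 0 ≤ x) y (hy : 0 ≤ y) hxy
  rcases hy.eq_or_lt with rfl | hy
  · rw [le_antisymm hxy hx]
  · have hcx := h.apply_mul_le (div_nonneg hx hy.le) ((div_le_one hy).mpr hxy) hy.le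
    rw [div_mul_cancel₀ x hy.ne'] at hcx
    calc Φ x ≤ x / y * Φ y := hcx
      _ ≤ 1 * Φ y := by gcongr; exacts [h.nonneg hy.le, (div_le_one hy).mpr hxy]
      _ = Φ y := one_mul _

lemma le_youngInv {u s : ℝ} (hu : 0 ≤ u) (hs : Φ u ≤ s) : u ≤ youngInv Φ s := by
  have hne : {r : ℝ | 0 ≤ r ∧ s < Φ r}.Nonempty := by
    obtain ⟨r, hr, hr₀⟩ :=
      ((h.2.2.2.1.eventually (eventually_gt_atTop s)).and (eventually_ge_atTop 0)).exists
    exact ⟨r, hr₀, hr⟩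
  refine le_csInf hne fun r ⟨hr₀, hr⟩ => le_of_not_gt fun hru => ?_
  exact (h.monotoneOn hr₀ hu hru.le).not_gt (hs.trans_lt hr)

lemma apply_youngInv_le {s : ℝ} (hs : 0 ≤ s) : Φ (youngInv Φ s) ≤ s := by
  rcases (youngInv_nonneg Φ s).eq_or_lt with hv | hv
  · rw [← hv, h.2.2.1]; exact hs
  refine ContinuousWithinAt.closure_le (s := Ico 0 (youngInv Φ s)) (g := fun _ => s) ?_ ?_
    continuousWithinAt_const fun r hr => apply_le_of_lt_youngInv hr.1 hr.2
  · rw [closure_Ico hv.ne]; exact ⟨hv.le, le_rfl⟩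
  · exact (h.2.1 _ hv.le).mono fun _ hr => hr.2.le

lemma youngInv_pos {s : ℝ} (hs : 0 < s) : 0 < youngInv Φ s := by
  set δ := min 1 (s / (Φ 1 + 1))
  have hΦ₁ : 0 ≤ Φ 1 := h.nonneg zero_le_one
  have hδ : 0 < δ := lt_min one_pos (by positivity)
  refine hδ.trans_le (h.le_youngInv hδ.le ?_)
  calc Φ δ = Φ (δ * 1) := by rw [mul_one]
    _ ≤ δ * Φ 1 := h.apply_mul_le hδ.le (min_le_left _ _) zero_le_one
    _ ≤ s / (Φ 1 + 1) * (Φ 1 + 1) := by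
      gcongr; exacts [min_le_right _ _, le_add_of_nonneg_right zero_le_one]
    _ = s := div_mul_cancel₀ s (by positivity)

end IsYoungFunction

lemma young_inequality_of_youngInv_mul_le {Φ₁ Φ₂ Φ : ℝ → ℝ}
    (h₁ : IsYoungFunction Φ₁) (h₂ : IsYoungFunction Φ₂) (hΦ : IsYoungFunction Φ)
    (hinv : ∀ t : ℝ, 0 ≤ t → youngInv Φ₁ t * youngInv Φ t ≤ youngInv Φ₂ t)
    {u v : ℝ} (hu : 0 ≤ u) (hv : 0 ≤ v) : Φ₂ (u * v) ≤ Φ₁ u + Φ v := by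
  set t := Φ₁ u + Φ v
  have hu' : u ≤ youngInv Φ₁ t := h₁.le_youngInv hu (le_add_of_nonneg_right (hΦ.nonneg hv))
  have hv' : v ≤ youngInv Φ t := hΦ.le_youngInv hv (le_add_of_nonneg_left (h₁.nonneg hu))
  have ht : 0 ≤ t := add_nonneg (h₁.nonneg hu) (hΦ.nonneg hv)
  calc Φ₂ (u * v) ≤ Φ₂ (youngInv Φ₂ t) :=
        h₂.monotoneOn (mul_nonneg hu hv) (youngInv_nonneg _ _)
          ((mul_le_mul hu' hv' hv (youngInv_nonneg _ _)).trans (hinv t ht))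
    _ ≤ t := h₂.apply_youngInv_le ht

lemma lintegral_young_mul_div_two_le {α : Type*} [MeasurableSpace α] (μ : Measure α)
    {Φ₁ Φ₂ Φ : ℝ → ℝ}
    (h₁ : IsYoungFunction Φ₁) (h₂ : IsYoungFunction Φ₂) (hΦ : IsYoungFunction Φ)
    (hinv : ∀ t : ℝ, 0 ≤ t → youngInv Φ₁ t * youngInv Φ t ≤ youngInv Φ₂ t)
    {g : α → ℝ} (hg : ∀ x, 0 ≤ g x) {v : ℝ} (hv : 0 ≤ v) :
    ∫⁻ x, ENNReal.ofReal (Φ₂ (g x * v / 2)) ∂μ ≤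
      2⁻¹ * (∫⁻ x, ENNReal.ofReal (Φ₁ (g x)) ∂μ + ENNReal.ofReal (Φ v) * μ univ) := by
  have hpoint : ∀ x, ENNReal.ofReal (Φ₂ (g x * v / 2)) ≤
      2⁻¹ * (ENNReal.ofReal (Φ₁ (g x)) + ENNReal.ofReal (Φ v)) := fun x => by
    have hgv := mul_nonneg (hg x) hv
    have hle : Φ₂ (g x * v / 2) ≤ 2⁻¹ * (Φ₁ (g x) + Φ v) := calc
      Φ₂ (g x * v / 2) = Φ₂ (2⁻¹ * (g x * v)) := by rw [div_eq_inv_mul]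
      _ ≤ 2⁻¹ * Φ₂ (g x * v) := h₂.apply_mul_le (by norm_num) (by norm_num) hgv
      _ ≤ 2⁻¹ * (Φ₁ (g x) + Φ v) := by
        gcongr; exact young_inequality_of_youngInv_mul_le h₁ h₂ hΦ hinv (hg x) hv
    refine (ENNReal.ofReal_le_ofReal hle).trans_eq ?_
    rw [ENNReal.ofReal_mul (by norm_num), ENNReal.ofReal_add (h₁.nonneg (hg x)) (hΦ.nonneg hv),
      ENNReal.ofReal_inv_of_pos two_pos, ENNReal.ofReal_ofNat]
  calc ∫⁻ x, ENNReal.ofReal (Φ₂ (g x * v / 2)) ∂μ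
      ≤ ∫⁻ x, 2⁻¹ * (ENNReal.ofReal (Φ₁ (g x)) + ENNReal.ofReal (Φ v)) ∂μ := lintegral_mono hpoint
    _ = _ := by
      rw [lintegral_const_mul' _ _ (by simp), lintegral_add_right _ measurable_const,
        lintegral_const]

lemma luxNormOn_le_ofReal_mul_of_forall {n : ℕ} {Φ₁ Φ₂ : ℝ → ℝ}
    {μ : Measure (EuclideanSpace ℝ (Fin n))} {f : EuclideanSpace ℝ (Fin n) → ℝ} {c : ℝ}
    (hc : 0 < c)
    (h : ∀ b : ℝ, 0 < b → ∫⁻ x, ENNReal.ofReal (Φ₁ (|f x| / b)) ∂μ ≤ 1 →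
      ∫⁻ x, ENNReal.ofReal (Φ₂ (|f x| / (c * b))) ∂μ ≤ 1) :
    luxNormOn Φ₂ μ f ≤ ENNReal.ofReal c * luxNormOn Φ₁ μ f := by
  have hc₀ : ENNReal.ofReal c ≠ 0 := ENNReal.ofReal_ne_zero_iff.mpr hc
  rw [mul_comm, ← ENNReal.div_le_iff hc₀ ENNReal.ofReal_ne_top]
  refine le_sInf ?_
  rintro _ ⟨b, ⟨hb, hint⟩, rfl⟩
  refine ENNReal.div_le_of_le_mul' ?_
  rw [← ENNReal.ofReal_mul hc.le]
  exact csInf_le (OrderBot.bddBelow _) ⟨c * b, ⟨mul_pos hc hb, h b hb hint⟩, rfl⟩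

theorem luxNormOn_le_of_youngInv_mul_le {n : ℕ} {μ : Measure (EuclideanSpace ℝ (Fin n))}
    (hμ₀ : μ univ ≠ 0) (hμ : μ univ ≠ ∞) {Φ₁ Φ₂ Φ : ℝ → ℝ}
    (h₁ : IsYoungFunction Φ₁) (h₂ : IsYoungFunction Φ₂) (hΦ : IsYoungFunction Φ)
    (hinv : ∀ t : ℝ, 0 ≤ t → youngInv Φ₁ t * youngInv Φ t ≤ youngInv Φ₂ t)
    (f : EuclideanSpace ℝ (Fin n) → ℝ) :
    luxNormOn Φ₂ μ f ≤
      ENNReal.ofReal (2 / youngInv Φ (1 / (μ univ).toReal)) * luxNormOn Φ₁ μ f := by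
  set s := 1 / (μ univ).toReal with hs_def
  have hs : 0 < s := one_div_pos.mpr (ENNReal.toReal_pos hμ₀ hμ)
  set v := youngInv Φ s
  have hv : 0 < v := hΦ.youngInv_pos hs
  have hΦv : ENNReal.ofReal (Φ v) * μ univ ≤ 1 := calc
    ENNReal.ofReal (Φ v) * μ univ ≤ ENNReal.ofReal s * μ univ := by
      gcongr; exact hΦ.apply_youngInv_le hs.le
    _ = 1 := by
      rw [hs_def, one_div, ENNReal.ofReal_inv_of_pos (ENNReal.toReal_pos hμ₀ hμ),
        ENNReal.ofReal_toReal hμ, ENNReal.inv_mul_cancel hμ₀ hμ]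
  refine luxNormOn_le_ofReal_mul_of_forall (by positivity) fun b hb hint => ?_
  have hdiv : ∀ x, |f x| / (2 / v * b) = |f x| / b * v / 2 := fun x => by
    field_simp
  simp_rw [hdiv]
  calc _ ≤ 2⁻¹ * (∫⁻ x, ENNReal.ofReal (Φ₁ (|f x| / b)) ∂μ + ENNReal.ofReal (Φ v) * μ univ) :=
        lintegral_young_mul_div_two_le μ h₁ h₂ hΦ hinv (fun x => by positivity) hv.le
    _ ≤ 2⁻¹ * (1 + 1) := by gcongr
    _ = 1 := by rw [one_add_one_eq_two, ENNReal.inv_mul_cancel two_ne_zero ENNReal.ofNat_ne_top]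

theorem luxNormOn_ball_le_general {n : ℕ}
    (a : EuclideanSpace ℝ (Fin n)) (r₀ : ℝ) (hr₀ : 0 < r₀)
    (Φ₁ Φ₂ Φ : ℝ → ℝ)
    (h₁ : IsYoungFunction Φ₁) (h₂ : IsYoungFunction Φ₂) (hΦ : IsYoungFunction Φ)
    (hinv : ∀ t : ℝ, 0 ≤ t → youngInv Φ₁ t * youngInv Φ t ≤ youngInv Φ₂ t)
    (f : EuclideanSpace ℝ (Fin n) → ℝ) :
    luxNormOn Φ₂ (volume.restrict (Metric.ball a r₀)) f ≤
      ENNReal.ofReal (2 / youngInv Φ (1 / (volume (Metric.ball a r₀)).toReal)) *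
        luxNormOn Φ₁ (volume.restrict (Metric.ball a r₀)) f := by
  have hball := luxNormOn_le_of_youngInv_mul_le (μ := volume.restrict (Metric.ball a r₀))
    ?_ ?_ h₁ h₂ hΦ hinv f
  · rwa [Measure.restrict_apply_univ] at hball
  · rw [Measure.restrict_apply_univ]; exact (Metric.measure_ball_pos volume a hr₀).ne'
  · rw [Measure.restrict_apply_univ]; exact measure_ball_lt_top.ne

theorem luxNormOn_ball_le {n : ℕ} (hn : 0 < n)
    (a : EuclideanSpace ℝ (Fin n)) (r₀ : ℝ) (hr₀ : 0 < r₀)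
    (Φ₁ Φ₂ Φ : ℝ → ℝ)
    (h₁ : IsYoungFunction Φ₁) (h₂ : IsYoungFunction Φ₂) (hΦ : IsYoungFunction Φ)
    (hinv : ∀ t : ℝ, 0 ≤ t → youngInv Φ₁ t * youngInv Φ t ≤ youngInv Φ₂ t)
    (f : EuclideanSpace ℝ (Fin n) → ℝ) (hf : Measurable f)
    (hfin : luxNormOn Φ₁ (volume.restrict (Metric.ball a r₀)) f < ⊤) :
    luxNormOn Φ₂ (volume.restrict (Metric.ball a r₀)) f ≤
      ENNReal.ofReal (2 / youngInv Φ (1 / (volume (Metric.ball a r₀)).toReal)) *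
        luxNormOn Φ₁ (volume.restrict (Metric.ball a r₀)) f :=
  luxNormOn_ball_le_general a r₀ hr₀ Φ₁ Φ₂ Φ h₁ h₂ hΦ hinv f
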